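/- Let F be a finite field of odd cardinality q containing an element i with i² = −1, and let H be the subgroup of PSL₂(F) consisting of the classes of all upper triangular matrices [[u, x],[0, u⁻¹]] with u, x ∈ F and u⁴ = 1. Let φ̄ ∈ PSL₂(F) be the class of the matrix [[−1, 0],[1 − i, −1]] ∈ SL₂(F). Then the intersection H ∩ φ̄⁻¹ H φ̄ consists of exactly two elements: the identity, and the class of the matrix [[−i, i − 1],[0, i]]. -/

import Mathlib

/-!
Everything can be computed in `SL₂(F)`: the preimage of `H` is the set of upper triangular
matrices `M = [[u, x], [0, u⁻¹]]` with `u⁴ = 1`, which is closed under `M ↦ -M`. For such `M`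
the lower left entry of `φ M φ⁻¹` is `(1 - i) (u⁻¹ - u - (1 - i) x)`, so `φ M φ⁻¹` is again
upper triangular exactly when `u⁻¹ - u = (1 - i) x`. As `u ∈ {±1, ±i}` and `2 ≠ 0`, this leaves
`u = ±1, x = 0`, i.e. `M = ±1`, and `u = ∓i, x = ±(i - 1)`, i.e. `M = ±ψ`.
-/

open Matrix MatrixGroups

def pslmk {R : Type*} [CommRing R] :
    Matrix.SpecialLinearGroup (Fin 2) R →* Matrix.ProjectiveSpecialLinearGroup (Fin 2) R :=
  QuotientGroup.mk' (Subgroup.center (Matrix.SpecialLinearGroup (Fin 2) R))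

theorem FiniteField.two_ne_zero_of_odd_card {F : Type*} [Field F] [Fintype F]
    (h : Odd (Fintype.card F)) : (2 : F) ≠ 0 :=
  Ring.two_ne_zero fun hF ↦ by
    simpa [Nat.odd_iff.mp h] using FiniteField.even_card_of_char_two hF

theorem cases_of_pow_four_eq_one_of_sub_eq_mul {F : Type*} [Field F] {i a b d : F}
    (h2 : (2 : F) ≠ 0) (hi : i ^ 2 = -1) (ha : a ^ 4 = 1) (had : a * d = 1)
    (h : d - a = (1 - i) * b) :
    (a = 1 ∧ b = 0 ∧ d = 1) ∨ (a = -1 ∧ b = 0 ∧ d = -1) ∨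
      (a = -i ∧ b = i - 1 ∧ d = i) ∨ (a = i ∧ b = 1 - i ∧ d = -i) := by
  have hb : 2 * b = (1 + i) * (d - a) := by linear_combination -(1 + i) * h + b * hi
  have hroots : (a - 1) * (a + 1) * (a + i) * (a - i) = 0 := by
    linear_combination ha - (a ^ 2 - 1) * hi
  rcases mul_eq_zero.mp hroots with hroots | ha
  rcases mul_eq_zero.mp hroots with hroots | ha
  rcases mul_eq_zero.mp hroots with ha | ha
  · obtain rfl : a = 1 := by linear_combination ha
    obtain rfl : d = 1 := by linear_combination had
    left
    exact ⟨rfl, mul_left_cancel₀ h2 (by linear_combination hb), rfl⟩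
  · obtain rfl : a = -1 := by linear_combination ha
    obtain rfl : d = -1 := by linear_combination -had
    right; left
    exact ⟨rfl, mul_left_cancel₀ h2 (by linear_combination hb), rfl⟩
  · obtain rfl : a = -i := by linear_combination ha
    obtain rfl : d = i := by linear_combination i * had + d * hi
    right; right; left
    exact ⟨rfl, mul_left_cancel₀ h2 (by linear_combination hb + 2 * hi), rfl⟩
  · have ha : a = i := by linear_combination ha
    rw [ha] at had hb
    obtain rfl : d = -i := by linear_combination -i * had + d * hi
    right; right; right
    exact ⟨ha, mul_left_cancel₀ h2 (by linear_combination hb - 2 * hi), rfl⟩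

namespace Matrix.SpecialLinearGroup

theorem mem_center_iff_eq_one_or_eq_neg_one {R : Type*} [CommRing R] [NoZeroDivisors R]
    {A : SL(2, R)} : A ∈ Subgroup.center SL(2, R) ↔ A = 1 ∨ A = -1 := by
  rw [mem_center_iff]
  constructor
  · rintro ⟨r, hr, hA⟩
    rcases (show r = 1 ∨ r = -1 by simpa using hr) with rfl | rfl
    · left; ext : 1; simp [← hA]
    · right; ext : 1; simp [← hA, ← diagonal_neg]
  · rintro (rfl | rfl)
    · exact ⟨1, one_pow _, by ext; simp⟩
    · exact ⟨-1, by simp, by simp [← diagonal_neg]⟩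

theorem apply_zero_zero_mul_apply_one_one {R : Type*} [CommRing R] {M : SL(2, R)}
    (h : M 1 0 = 0) : M 0 0 * M 1 1 = 1 := by
  simpa [h] using (det_fin_two (M : Matrix (Fin 2) (Fin 2) R)).symm.trans M.det_coe

variable {F : Type*} [Field F]

theorem coe_eq_of_apply_one_zero_eq_zero {M : SL(2, F)} (h : M 1 0 = 0) :
    (M : Matrix (Fin 2) (Fin 2) F) = !![M 0 0, M 0 1; 0, (M 0 0)⁻¹] := by
  rw [← h, ← eq_inv_of_mul_eq_one_right (apply_zero_zero_mul_apply_one_one h)]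
  exact eta_fin_two _

variable {i : F} {φ : SL(2, F)} (hφ : (φ : Matrix (Fin 2) (Fin 2) F) = !![-1, 0; 1 - i, -1])
include hφ

theorem conj_apply_zero_zero (M : SL(2, F)) :
    (φ * M * φ⁻¹) 0 0 = M 0 0 + (1 - i) * M 0 1 := by
  simp only [coe_mul, coe_inv, hφ, adjugate_fin_two_of, mul_apply, Fin.sum_univ_two, of_apply,
    cons_val_zero, cons_val_one, cons_val_fin_one]
  ring

theorem conj_apply_one_zero (M : SL(2, F)) :
    (φ * M * φ⁻¹) 1 0 = M 1 0 + (1 - i) * (M 1 1 - M 0 0 - (1 - i) * M 0 1) := by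
  simp only [coe_mul, coe_inv, hφ, adjugate_fin_two_of, mul_apply, Fin.sum_univ_two, of_apply,
    cons_val_zero, cons_val_one, cons_val_fin_one]
  ring

end Matrix.SpecialLinearGroup

section

variable {R : Type*} [CommRing R] [NoZeroDivisors R]

theorem pslmk_eq_pslmk_iff {M N : SL(2, R)} : pslmk M = pslmk N ↔ M = N ∨ M = -N := by
  rw [eq_comm, pslmk, QuotientGroup.mk'_apply, QuotientGroup.mk'_apply, QuotientGroup.eq,
    SpecialLinearGroup.mem_center_iff_eq_one_or_eq_neg_one, inv_mul_eq_one,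
    inv_mul_eq_iff_eq_mul, mul_neg_one, eq_comm]

theorem pslmk_mem_image_iff {S : Set SL(2, R)} (hS : ∀ M ∈ S, -M ∈ S) {M : SL(2, R)} :
    pslmk M ∈ pslmk '' S ↔ M ∈ S := by
  refine ⟨fun ⟨N, hN, hNM⟩ ↦ ?_, fun hM ↦ ⟨M, hM, rfl⟩⟩
  rcases pslmk_eq_pslmk_iff.mp hNM with rfl | rfl
  exacts [hN, by simpa using hS _ hN]

end

section

variable {F : Type*} [Field F]

variable (F) in
def upperTriangularQuartic : Set SL(2, F) := {M | M 1 0 = 0 ∧ M 0 0 ^ 4 = 1}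

theorem neg_mem_upperTriangularQuartic {M : SL(2, F)} (hM : M ∈ upperTriangularQuartic F) :
    -M ∈ upperTriangularQuartic F := by
  simpa [upperTriangularQuartic, SpecialLinearGroup.coe_neg, Even.neg_pow (by decide : Even 4)]
    using hM

theorem setOf_pslmk_upper_eq_image :
    {g | ∃ u x : F, u ^ 4 = 1 ∧ ∃ h : det !![u, x; 0, u⁻¹] = 1,
      g = pslmk ⟨!![u, x; 0, u⁻¹], h⟩} = pslmk '' upperTriangularQuartic F := by
  ext g
  constructor
  · rintro ⟨u, x, hu, h, rfl⟩
    exact ⟨⟨_, h⟩, ⟨rfl, hu⟩, rfl⟩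
  · rintro ⟨M, ⟨h10, h00⟩, rfl⟩
    have hM := SpecialLinearGroup.coe_eq_of_apply_one_zero_eq_zero h10
    exact ⟨M 0 0, M 0 1, h00, hM ▸ M.det_coe, congrArg pslmk (Subtype.ext hM)⟩

theorem mem_upperTriangularQuartic_and_conj_mem_iff {i : F} {φ ψ : SL(2, F)}
    (hφ : (φ : Matrix (Fin 2) (Fin 2) F) = !![-1, 0; 1 - i, -1])
    (hψ : (ψ : Matrix (Fin 2) (Fin 2) F) = !![-i, i - 1; 0, i])
    (h2 : (2 : F) ≠ 0) (hi : i ^ 2 = -1) (M : SL(2, F)) :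
    M ∈ upperTriangularQuartic F ∧ φ * M * φ⁻¹ ∈ upperTriangularQuartic F ↔
      (M = 1 ∨ M = -1) ∨ (M = ψ ∨ M = -ψ) := by
  constructor
  · rintro ⟨⟨h10, h00⟩, hconj, -⟩
    rw [SpecialLinearGroup.conj_apply_one_zero hφ, h10, zero_add] at hconj
    have hi1 : 1 - i ≠ 0 := by
      have h2' : (1 - i) * (1 + i) = 2 := by linear_combination -hi
      exact left_ne_zero_of_mul (h2' ▸ h2)
    have hsub : M 1 1 - M 0 0 = (1 - i) * M 0 1 := by
      linear_combination (mul_eq_zero.mp hconj).resolve_left hi1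
    have hM := eta_fin_two (M : Matrix (Fin 2) (Fin 2) F)
    rcases cases_of_pow_four_eq_one_of_sub_eq_mul h2 hi h00
        (SpecialLinearGroup.apply_zero_zero_mul_apply_one_one h10) hsub with
      ⟨ha, hb, hd⟩ | ⟨ha, hb, hd⟩ | ⟨ha, hb, hd⟩ | ⟨ha, hb, hd⟩ <;>
      rw [ha, hb, h10, hd] at hM
    · left; left; ext a b; fin_cases a <;> fin_cases b <;> simp [hM]
    · left; right; ext a b; fin_cases a <;> fin_cases b <;> simp [hM]
    · right; left; ext a b; fin_cases a <;> fin_cases b <;> simp [hM, hψ]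
    · right; right; ext a b; fin_cases a <;> fin_cases b <;> simp [hM, hψ]
  · have neg_mem (N : SL(2, F))
        (hN : N ∈ upperTriangularQuartic F ∧ φ * N * φ⁻¹ ∈ upperTriangularQuartic F) :
        -N ∈ upperTriangularQuartic F ∧ φ * -N * φ⁻¹ ∈ upperTriangularQuartic F :=
      ⟨neg_mem_upperTriangularQuartic hN.1,
        by simpa only [mul_neg, neg_mul] using neg_mem_upperTriangularQuartic hN.2⟩
    have one_mem :
        (1 : SL(2, F)) ∈ upperTriangularQuartic F ∧ φ * 1 * φ⁻¹ ∈ upperTriangularQuartic F := by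
      simp [upperTriangularQuartic]
    have ψ_mem : ψ ∈ upperTriangularQuartic F ∧ φ * ψ * φ⁻¹ ∈ upperTriangularQuartic F := by
      have hconj00 : -i + (1 - i) * (i - 1) = i := by linear_combination -hi
      have hi4 : i ^ 4 = 1 := by linear_combination (i ^ 2 - 1) * hi
      simp only [upperTriangularQuartic, Set.mem_ofPred_eq,
        SpecialLinearGroup.conj_apply_zero_zero hφ, SpecialLinearGroup.conj_apply_one_zero hφ, hψ, of_apply, cons_val', cons_val_zero,
        cons_val_one, empty_val', cons_val_fin_one, hconj00, hi4, true_and, and_true]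
      exact ⟨by linear_combination (i ^ 2 - 1) * hi, by linear_combination (1 - i) * hi⟩
    rintro ((rfl | rfl) | (rfl | rfl))
    exacts [one_mem, neg_mem _ one_mem, ψ_mem, neg_mem _ ψ_mem]

end

/-- Let `F` be a finite field of odd cardinality `q` containing `i` with `i² = -1`, let
`H ≤ PSL₂(F)` consist of the classes of the matrices `[[u, x], [0, u⁻¹]]` with `u⁴ = 1`,
and let `φ̄` be the class of `[[-1, 0], [1 - i, -1]]`. Then `H ∩ φ̄⁻¹ H φ̄` consists
exactly of the identity and the class of `[[-i, i - 1], [0, i]]`. -/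
theorem stab_inter_conj_stab (F : Type*) [Field F] [Fintype F]
    (q : ℕ) (hq : Fintype.card F = q) (hodd : Odd q)
    (i : F) (hi : i ^ 2 = -1)
    (H : Subgroup (Matrix.ProjectiveSpecialLinearGroup (Fin 2) F))
    (hH : (H : Set (Matrix.ProjectiveSpecialLinearGroup (Fin 2) F)) =
      {g | ∃ u x : F, u ^ 4 = 1 ∧ ∃ h : Matrix.det !![u, x; 0, u⁻¹] = 1,
        g = pslmk ⟨!![u, x; 0, u⁻¹], h⟩})
    (φ ψ : Matrix.SpecialLinearGroup (Fin 2) F)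
    (hφ : (φ : Matrix (Fin 2) (Fin 2) F) = !![-1, 0; 1 - i, -1])
    (hψ : (ψ : Matrix (Fin 2) (Fin 2) F) = !![-i, i - 1; 0, i]) :
    ((H ⊓ Subgroup.map (MulAut.conj ((pslmk φ)⁻¹)).toMonoidHom H :
        Subgroup (Matrix.ProjectiveSpecialLinearGroup (Fin 2) F)) :
      Set (Matrix.ProjectiveSpecialLinearGroup (Fin 2) F)) = {1, pslmk ψ} := by
  have h2 : (2 : F) ≠ 0 := FiniteField.two_ne_zero_of_odd_card (hq ▸ hodd)
  have mem_H (M : SL(2, F)) : pslmk M ∈ H ↔ M ∈ upperTriangularQuartic F := by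
    rw [← SetLike.mem_coe, hH, setOf_pslmk_upper_eq_image,
      pslmk_mem_image_iff fun _ ↦ neg_mem_upperTriangularQuartic]
  ext g
  obtain ⟨M, rfl⟩ := QuotientGroup.mk'_surjective _ g
  change pslmk M ∈ _ ↔ pslmk M ∈ _
  rw [SetLike.mem_coe, Subgroup.mem_inf, Subgroup.mem_map_equiv, MulAut.conj_symm_apply, inv_inv,
    ← map_inv, ← map_mul, ← map_mul, mem_H, mem_H, Set.mem_insert_iff, Set.mem_singleton_iff,
    ← map_one pslmk, pslmk_eq_pslmk_iff, pslmk_eq_pslmk_iff]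
  exact mem_upperTriangularQuartic_and_conj_mem_iff hφ hψ h2 hi M
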